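/- ∑_{k=1}^∞ (27/20)^k / C(3k,k) = 1/4 + (13√15/48)·arctan(√15 − √12) − (5/96)·log(5/2). -/

import Mathlib

/-!
The Beta integral gives `1 / C(3k+3, k+1) = (k+1) ∫₀¹ x^k (1-x)^(2k+2) dx`, so the series is the
integral over `[0, 1]` of `∑ (k+1) (27/20)^(k+1) x^k (1-x)^(2k+2)`, an arithmetico-geometric series
in `r = 27/20 · x(1-x)²` (with `r ≤ 1/5`), summing to a rational function. Its primitive is
found by partial fractions; the two arctangent values at the endpoints combine to `arctan (9/√15)`,
which is `3 arctan (√15 - √12)` by the triple-angle formula.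
-/

open Real MeasureTheory intervalIntegral
open scoped Nat

theorem integral_pow_mul_one_sub_pow (m n : ℕ) :
    ∫ x in (0 : ℝ)..1, x ^ m * (1 - x) ^ n = (m ! : ℝ) * n ! / (m + n + 1)! := by
  have hB := Complex.betaIntegral_eq_Gamma_mul_div (m + 1) (n + 1)
    (by norm_cast; omega) (by norm_cast; omega)
  rw [show (m + 1 + (n + 1) : ℂ) = ((m + n + 1 : ℕ) : ℂ) + 1 by push_cast; ring,
    Complex.Gamma_nat_eq_factorial, Complex.Gamma_nat_eq_factorial,
    Complex.Gamma_nat_eq_factorial, Complex.betaIntegral] at hB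
  have h_integrand : ∀ x : ℝ, (x : ℂ) ^ ((m : ℂ) + 1 - 1) * (1 - (x : ℂ)) ^ ((n : ℂ) + 1 - 1)
      = ((x ^ m * (1 - x) ^ n : ℝ) : ℂ) := fun x ↦ by simp [← Complex.cpow_natCast]
  simp only [h_integrand, integral_ofReal] at hB
  exact Complex.ofReal_injective (by rw [hB]; push_cast; ring)

theorem inv_choose_eq_integral (m n : ℕ) :
    ((m + n + 1).choose (m + 1) : ℝ)⁻¹ = (m + 1) * ∫ x in (0 : ℝ)..1, x ^ m * (1 - x) ^ n := by
  rw [integral_pow_mul_one_sub_pow, Nat.cast_choose ℝ (by omega),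
    show m + n + 1 - (m + 1) = n by omega]
  push_cast [Nat.factorial_succ]
  field_simp

theorem hasSum_succ_mul_geometric {r : ℝ} (hr : |r| < 1) :
    HasSum (fun n : ℕ ↦ (n + 1) * r ^ n) (1 / (1 - r) ^ 2) := by
  simpa using hasSum_choose_mul_geometric_of_norm_lt_one 1 (r := r) hr

theorem hasSum_intervalIntegral_of_nonneg {F : ℕ → ℝ → ℝ} {f : ℝ → ℝ} {a b : ℝ}
    (hF : ∀ n, Continuous (F n)) (hF_nonneg : ∀ n, ∀ x ∈ Set.uIoc a b, 0 ≤ F n x)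
    (hFf : ∀ x ∈ Set.uIoc a b, HasSum (fun n ↦ F n x) (f x))
    (hf : IntervalIntegrable f volume a b) :
    HasSum (fun n ↦ ∫ x in a..b, F n x) (∫ x in a..b, f x) := by
  refine hasSum_integral_of_dominated_convergence F (fun n ↦ (hF n).aestronglyMeasurable)
    (fun n ↦ .of_forall fun x hx ↦ (Real.norm_of_nonneg (hF_nonneg n x hx)).le)
    (.of_forall fun x hx ↦ (hFf x hx).summable) ?_ (.of_forall hFf)
  refine hf.congr_ae ((ae_restrict_iff' measurableSet_uIoc).2 (.of_forall fun x hx ↦ ?_))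
  exact (hFf x hx).tsum_eq.symm

theorem hasSum_succ_mul_pow_mul_one_sub_pow {a x : ℝ} (h : |a * (x * (1 - x) ^ 2)| < 1) :
    HasSum (fun k : ℕ ↦ a ^ (k + 1) * (k + 1) * (x ^ k * (1 - x) ^ (2 * k + 2)))
      (a * (1 - x) ^ 2 / (1 - a * (x * (1 - x) ^ 2)) ^ 2) := by
  rw [div_eq_mul_one_div]
  refine ((hasSum_succ_mul_geometric h).mul_left (a * (1 - x) ^ 2)).congr_fun fun k ↦ ?_
  rw [pow_add (1 - x) (2 * k) 2, pow_mul, mul_pow, mul_pow, pow_succ]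
  ring

theorem mul_one_sub_sq_le {x : ℝ} (hx : x ≤ 1) : x * (1 - x) ^ 2 ≤ 4 / 27 := by
  nlinarith [mul_nonneg (sq_nonneg (3 * x - 1)) (by linarith : (0 : ℝ) ≤ 4 - 3 * x)]

noncomputable def seriesIntegrand (x : ℝ) : ℝ :=
  540 * (1 - x) ^ 2 / ((5 - 3 * x) ^ 2 * (9 * x ^ 2 - 3 * x + 4) ^ 2)

theorem nine_mul_sq_sub_three_mul_add_four_pos (x : ℝ) : 0 < 9 * x ^ 2 - 3 * x + 4 := by
  nlinarith [sq_nonneg (6 * x - 1)]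

theorem continuousOn_seriesIntegrand : ContinuousOn seriesIntegrand (Set.Iio (5 / 3)) := by
  refine ContinuousOn.div (by fun_prop) (by fun_prop) fun x hx ↦ ?_
  have : 0 < 5 - 3 * x := by linarith [Set.mem_Iio.1 hx]
  have := nine_mul_sq_sub_three_mul_add_four_pos x
  positivity

theorem intervalIntegrable_seriesIntegrand : IntervalIntegrable seriesIntegrand volume 0 1 := by
  refine (continuousOn_seriesIntegrand.mono fun x hx ↦ ?_).intervalIntegrable
  rw [Set.uIcc_of_le zero_le_one] at hx
  exact hx.2.trans_lt (by norm_num)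

theorem hasSum_seriesIntegrand {x : ℝ} (hx₀ : 0 ≤ x) (hx₁ : x ≤ 1) :
    HasSum (fun k : ℕ ↦ (27 / 20 : ℝ) ^ (k + 1) * (k + 1) * (x ^ k * (1 - x) ^ (2 * k + 2)))
      (seriesIntegrand x) := by
  have hr := mul_one_sub_sq_le hx₁
  have hr₀ : 0 ≤ x * (1 - x) ^ 2 := by positivity
  convert hasSum_succ_mul_pow_mul_one_sub_pow (a := 27 / 20) (x := x)
    (by rw [abs_lt]; constructor <;> linarith) using 1
  have h₁ : 5 - 3 * x ≠ 0 := by linarith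
  have h₂ := (nine_mul_sq_sub_three_mul_add_four_pos x).ne'
  rw [seriesIntegrand, show 1 - 27 / 20 * (x * (1 - x) ^ 2)
    = (5 - 3 * x) * (9 * x ^ 2 - 3 * x + 4) / 20 by ring]
  field_simp
  ring

theorem tsum_eq_integral_seriesIntegrand :
    ∑' k : ℕ, (27 / 20 : ℝ) ^ (k + 1) / ((3 * (k + 1)).choose (k + 1) : ℝ)
      = ∫ x in (0 : ℝ)..1, seriesIntegrand x := by
  have hsum := hasSum_intervalIntegral_of_nonneg
    (F := fun k x ↦ (27 / 20 : ℝ) ^ (k + 1) * (k + 1) * (x ^ k * (1 - x) ^ (2 * k + 2)))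
    (fun k ↦ by fun_prop)
    (fun k x hx ↦ by
      rw [Set.uIoc_of_le zero_le_one] at hx
      have : 0 ≤ 1 - x := by linarith [hx.2]
      have := hx.1.le
      positivity)
    (fun x hx ↦ by
      rw [Set.uIoc_of_le zero_le_one] at hx
      exact hasSum_seriesIntegrand hx.1.le hx.2)
    intervalIntegrable_seriesIntegrand
  refine (hsum.congr_fun fun k ↦ ?_).tsum_eq
  rw [intervalIntegral.integral_const_mul, div_eq_mul_inv, mul_assoc, ← inv_choose_eq_integral,
    show k + (2 * k + 2) + 1 = 3 * (k + 1) by ring]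

noncomputable def seriesPrimitive (x : ℝ) : ℝ :=
  5 / 144 * log (5 - 3 * x) - 5 / 288 * log (9 * x ^ 2 - 3 * x + 4)
    + 13 * √15 / 144 * arctan ((6 * x - 1) / √15)
    + (5 / (5 - 3 * x) + (105 * x + 20) / (9 * x ^ 2 - 3 * x + 4)) / 36

theorem hasDerivAt_seriesPrimitive {x : ℝ} (hx : 5 - 3 * x ≠ 0) :
    HasDerivAt seriesPrimitive (seriesIntegrand x) x := by
  have hQ := (nine_mul_sq_sub_three_mul_add_four_pos x).ne'
  have hL : HasDerivAt (fun x : ℝ ↦ 5 - 3 * x) (-3) x := by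
    simpa using ((hasDerivAt_id x).const_mul 3).const_sub 5
  have hQ' : HasDerivAt (fun x : ℝ ↦ 9 * x ^ 2 - 3 * x + 4) (18 * x - 3) x :=
    ((((hasDerivAt_pow 2 x).const_mul 9).sub ((hasDerivAt_id x).const_mul 3)).add_const
      4).congr_deriv (by norm_num; ring)
  have hA : HasDerivAt (fun x : ℝ ↦ (6 * x - 1) / √15) (6 / √15) x := by
    simpa using (((hasDerivAt_id x).const_mul 6).sub_const 1).div_const √15
  have hN : HasDerivAt (fun x : ℝ ↦ 105 * x + 20) 105 x := by
    simpa using ((hasDerivAt_id x).const_mul 105).add_const 20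
  have := ((((hL.log hx).const_mul (5 / 144)).sub ((hQ'.log hQ).const_mul (5 / 288))).add
    ((hA.arctan).const_mul (13 * √15 / 144))).add
    ((((hasDerivAt_const x 5).div hL hx).add (hN.div hQ' hQ)).div_const 36)
  refine (this.congr_deriv ?_ : HasDerivAt seriesPrimitive _ x)
  have h15 : √15 ≠ 0 := by positivity
  have h_arctan_denom : 1 + ((6 * x - 1) / √15) ^ 2 = 4 * (9 * x ^ 2 - 3 * x + 4) / 15 := by
    rw [div_pow, sq_sqrt (by norm_num)]
    ring
  rw [seriesIntegrand, h_arctan_denom]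
  -- with the denominators abstracted, `field_simp` clears them completely
  set L := 5 - 3 * x with hL_def
  set Q := 9 * x ^ 2 - 3 * x + 4 with hQ_def
  field_simp
  rw [hL_def, hQ_def]
  ring

theorem integral_seriesIntegrand :
    ∫ x in (0 : ℝ)..1, seriesIntegrand x = seriesPrimitive 1 - seriesPrimitive 0 := by
  refine integral_eq_sub_of_hasDerivAt (fun x hx ↦ hasDerivAt_seriesPrimitive ?_)
    intervalIntegrable_seriesIntegrand
  rw [Set.uIcc_of_le zero_le_one] at hx
  linarith [hx.2]

theorem three_mul_arctan {x : ℝ} (h : 3 * x ^ 2 < 1) :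
    3 * arctan x = arctan ((3 * x - x ^ 3) / (1 - 3 * x ^ 2)) := by
  have h₁ : 0 < 1 - x ^ 2 := by nlinarith
  have h₂ : 0 < 1 - 3 * x ^ 2 := by linarith
  rw [show 3 * arctan x = 2 * arctan x + arctan x by ring,
    two_mul_arctan (by nlinarith) (by nlinarith), arctan_add]
  · congr 1
    field_simp
    ring
  · rw [div_mul_eq_mul_div, div_lt_one h₁]
    nlinarith

theorem three_mul_arctan_sqrt15_sub_sqrt12 :
    3 * arctan (√15 - √12) = arctan (9 / √15) := by
  have h15 : √15 = √3 * √5 := by rw [← sqrt_mul (by norm_num)]; norm_num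
  have h12 : √12 = 2 * √3 := by
    rw [show (12 : ℝ) = 2 ^ 2 * 3 by norm_num, sqrt_mul (by norm_num), sqrt_sq (by norm_num)]
  have h3 : √3 ^ 2 = 3 := sq_sqrt (by norm_num)
  have h5 : √5 ^ 2 = 5 := sq_sqrt (by norm_num)
  have h5_gt : 20 / 9 < √5 := by rw [lt_sqrt (by norm_num)]; norm_num
  set t := √15 - √12 with ht
  have ht2 : t ^ 2 = 27 - 12 * √5 := by
    rw [ht, h15, h12]
    linear_combination (√5 - 2) ^ 2 * h3 + 3 * h5
  have ht15 : t * √15 = 15 - 6 * √5 := by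
    rw [ht, h15, h12]
    linear_combination (√5 - 2) * √5 * h3 + 3 * h5
  have h_lt : 3 * t ^ 2 < 1 := by rw [ht2]; linarith
  rw [three_mul_arctan h_lt]
  congr 1
  rw [div_eq_div_iff (by linarith) (by positivity)]
  linear_combination (3 - t ^ 2) * ht15 + (12 + 6 * √5) * ht2 - 72 * h5

theorem seriesPrimitive_one_sub_zero :
    seriesPrimitive 1 - seriesPrimitive 0
      = 1 / 4 + 13 * √15 / 48 * arctan (√15 - √12) - 5 / 96 * log (5 / 2) := by
  have h_arctan : arctan (5 / √15) - arctan (-1 / √15) = 3 * arctan (√15 - √12) := by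
    have h15 : (5 / √15) * (1 / √15) = 1 / 3 := by
      rw [div_mul_div_comm, mul_self_sqrt (by norm_num)]
      norm_num
    rw [neg_div, arctan_neg, sub_neg_eq_add, arctan_add (by rw [h15]; norm_num), h15,
      three_mul_arctan_sqrt15_sub_sqrt12]
    congr 1
    field_simp
    norm_num
  have h_log : log (5 / 2) = log 5 - log 2 := log_div (by norm_num) (by norm_num)
  have h_log10 : log 10 = log 2 + log 5 := by
    rw [← log_mul (by norm_num) (by norm_num)]
    norm_num
  have h_log4 : log 4 = 2 * log 2 := by
    rw [← log_rpow (by norm_num)]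
    norm_num
  have h_one : seriesPrimitive 1
      = 5 / 144 * log 2 - 5 / 288 * log 10 + 13 * √15 / 144 * arctan (5 / √15) + 5 / 12 := by
    norm_num [seriesPrimitive]
  have h_zero : seriesPrimitive 0
      = 5 / 144 * log 5 - 5 / 288 * log 4 + 13 * √15 / 144 * arctan (-1 / √15) + 1 / 6 := by
    norm_num [seriesPrimitive]
  rw [h_one, h_zero, h_log, h_log10, h_log4]
  linear_combination 13 * √15 / 144 * h_arctan

theorem stmt_17 :
    ∑' k : ℕ, (27/20 : ℝ)^(k+1) / ((((3*(k+1)).choose (k+1) : ℕ)) : ℝ) =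
    1/4 + (13*Real.sqrt 15/48)*Real.arctan (Real.sqrt 15 - Real.sqrt 12) - (5/96)*Real.log (5/2) := by
  rw [tsum_eq_integral_seriesIntegrand, integral_seriesIntegrand, seriesPrimitive_one_sub_zero]
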